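/- arXiv:2601.12653 — 2 statements merged into one kernel-verified Lean document; each statement's English description precedes it below -/
import Mathlib

section
/- Suppose η1 > 0, 0 < η24 < 3η1, and 5η1 + 10η2 − 9η24 > 0. Then there exists a constant C0 > 0 such that for every third-order array G = (G_{ijk}) ∈ ℝ^{3×3×3} satisfying G_{ijk} = G_{jik} for all i,j,k and Σ_{i=1}^{3} G_{iik} = 0 for every k, one has (η1/2)·Σ_{i,j,k} G_{ijk}² + ((η2 − η24)/2)·Σ_i (Σ_j G_{ijj})(Σ_k G_{ikk}) + ((η24 − η1)/2)·Σ_{i,j,k} G_{ijk} G_{ikj} ≥ C0 · Σ_{i,j,k} G_{ijk}². -/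
set_option maxHeartbeats 4000000 in
/-- If `η₁ > 0`, `0 < η₂₄ < 3 η₁` and `5 η₁ + 10 η₂ − 9 η₂₄ > 0`, then there is
a constant `C₀ > 0` such that for every third-order array `G = (G_{ijk})` which is symmetric in
its first two indices (`G_{ijk} = G_{jik}`) and traceless (`∑ᵢ G_{iik} = 0` for every `k`),
`(η₁/2)·∑ G_{ijk}² + ((η₂−η₂₄)/2)·∑ᵢ (∑ⱼ G_{ijj})(∑ₖ G_{ikk}) + ((η₂₄−η₁)/2)·∑ G_{ijk} G_{ikj}
  ≥ C₀ · ∑ G_{ijk}²`. -/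
theorem stmt_0 (η1 η2 η24 : ℝ) (hη1 : 0 < η1) (hη24 : 0 < η24) (hη24' : η24 < 3 * η1)
    (hη : 0 < 5 * η1 + 10 * η2 - 9 * η24) :
    ∃ C0 : ℝ, 0 < C0 ∧
      ∀ G : Fin 3 → Fin 3 → Fin 3 → ℝ,
        (∀ i j k, G i j k = G j i k) →
        (∀ k, (∑ i, G i i k) = 0) →
        C0 * (∑ i, ∑ j, ∑ k, (G i j k) ^ 2) ≤
          η1 / 2 * (∑ i, ∑ j, ∑ k, (G i j k) ^ 2)
            + (η2 - η24) / 2 * (∑ i, (∑ j, G i j j) * (∑ k, G i k k))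
            + (η24 - η1) / 2 * (∑ i, ∑ j, ∑ k, G i j k * G i k j) := by
  set m : ℝ := min η24 (min ((3*η1-η24)/2) ((5*η1+10*η2-9*η24)/6)) with hm
  have hmpos : 0 < m := lt_min hη24 (lt_min (by linarith) (by linarith))
  have hm1 : m ≤ η24 := min_le_left _ _
  have hm2 : m ≤ (3*η1-η24)/2 := le_trans (min_le_right _ _) (min_le_left _ _)
  have hm3 : m ≤ (5*η1+10*η2-9*η24)/6 := le_trans (min_le_right _ _) (min_le_right _ _)
  refine ⟨m/2, by linarith, ?_⟩
  intro G hsym htr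
  have htr' : ∀ k, G 2 2 k = -G 0 0 k - G 1 1 k := by
    intro k
    have := htr k
    simp only [Fin.sum_univ_three] at this
    linarith
  simp only [Fin.sum_univ_three]
  simp only [show ∀ k, G 1 0 k = G 0 1 k from fun k => hsym 1 0 k]
  simp only [show ∀ k, G 2 0 k = G 0 2 k from fun k => hsym 2 0 k]
  simp only [show ∀ k, G 2 1 k = G 1 2 k from fun k => hsym 2 1 k]
  simp only [htr']
  set a0 := G 0 0 0 with ha0
  set b0 := G 0 1 0 with hb0
  set c0 := G 0 2 0 with hc0
  set d0 := G 1 1 0 with hd0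
  set e0 := G 1 2 0 with he0
  set a1 := G 0 0 1 with ha1
  set b1 := G 0 1 1 with hb1
  set c1 := G 0 2 1 with hc1
  set d1 := G 1 1 1 with hd1
  set e1 := G 1 2 1 with he1
  set a2 := G 0 0 2 with ha2
  set b2 := G 0 1 2 with hb2
  set c2 := G 0 2 2 with hc2
  set d2 := G 1 1 2 with hd2
  set e2 := G 1 2 2 with he2
  clear_value a0 b0 c0 d0 e0 a1 b1 c1 d1 e1 a2 b2 c2 d2 e2
  have hS1 : (0:ℝ) ≤ ((3/5)*a0 + (-2/5)*b1 + (-2/5)*c2)^2 + ((8/15)*b0 + (1/3)*a1 + (-2/15)*d1 + (-2/15)*e2)^2 + ((8/15)*c0 + (-2/15)*e1 + (7/15)*a2 + (2/15)*d2)^2 + 2*((8/15)*b0 + (1/3)*a1 + (-2/15)*d1 + (-2/15)*e2)^2 + 2*((-2/15)*a0 + (1/3)*d0 + (8/15)*b1 + (-2/15)*c2)^2 + 2*((1/3)*e0 + (1/3)*c1 + (1/3)*b2)^2 + 2*((8/15)*c0 + (-2/15)*e1 + (7/15)*a2 + (2/15)*d2)^2 + 2*((1/3)*e0 + (1/3)*c1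 + (1/3)*b2)^2 + 2*((-7/15)*a0 + (-1/3)*d0 + (-2/15)*b1 + (8/15)*c2)^2 + ((-2/15)*a0 + (1/3)*d0 + (8/15)*b1 + (-2/15)*c2)^2 + ((-2/5)*b0 + (3/5)*d1 + (-2/5)*e2)^2 + ((-2/15)*c0 + (8/15)*e1 + (2/15)*a2 + (7/15)*d2)^2 + 2*((1/3)*e0 + (1/3)*c1 + (1/3)*b2)^2 + 2*((-2/15)*c0 + (8/15)*e1 + (2/15)*a2 + (7/15)*d2)^2 + 2*((-2/15)*b0 + (-1/3)*a1 + (-7/15)*d1 + (8/15)*e2)^2 + ((-7/15)*a0 + (-1/3)*d0 + (-2/15)*b1 + (8/15)*c2)^2 + ((-2/15)*b0 + (-1/3)*a1 + (-7/15)*d1 + (8/15)*e2)^2 + ((-2/5)*c0 + (-2/5)*e1 + (-3/5)*a2 + (-3/5)*d2)^2 := by positivity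
  have hS2 : (0:ℝ) ≤ ((-1/3)*b0 + (2/3)*a1 + (1/3)*d1 + (1/3)*e2)^2 + ((-1/3)*c0 + (1/3)*e1 + (1/3)*a2 + (-1/3)*d2)^2 + 2*((1/6)*b0 + (-1/3)*a1 + (-1/6)*d1 + (-1/6)*e2)^2 + 2*((-1/6)*a0 + (-1/3)*d0 + (1/6)*b1 + (-1/6)*c2)^2 + 2*((-1/3)*e0 + (-1/3)*c1 + (2/3)*b2)^2 + 2*((1/6)*c0 + (-1/6)*e1 + (-1/6)*a2 + (1/6)*d2)^2 + 2*((-1/3)*e0 + (2/3)*c1 + (-1/3)*b2)^2 + 2*((1/6)*a0 + (1/3)*d0 + (-1/6)*b1 + (1/6)*c2)^2 + ((1/3)*a0 + (2/3)*d0 + (-1/3)*b1 + (1/3)*c2)^2 + ((1/3)*c0 + (-1/3)*e1 + (-1/3)*a2 + (1/3)*d2)^2 + 2*((2/3)*e0 + (-1/3)*c1 + (-1/3)*b2)^2 + 2*((-1/6)*c0 + (1/6)*e1 + (1/6)*a2 + (-1/6)*d2)^2 + 2*((-1/6)*b0 + (1/3)*a1 + (1/6)*d1 + (1/6)*e2)^2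 + ((-1/3)*a0 + (-2/3)*d0 + (1/3)*b1 + (-1/3)*c2)^2 + ((1/3)*b0 + (-2/3)*a1 + (-1/3)*d1 + (-1/3)*e2)^2 := by positivity
  have hS3 : (0:ℝ) ≤ ((2/5)*a0 + (2/5)*b1 + (2/5)*c2)^2 + ((-1/5)*b0 + (-1/5)*d1 + (-1/5)*e2)^2 + ((-1/5)*c0 + (-1/5)*e1 + (1/5)*a2 + (1/5)*d2)^2 + 2*((3/10)*b0 + (3/10)*d1 + (3/10)*e2)^2 + 2*((3/10)*a0 + (3/10)*b1 + (3/10)*c2)^2 + 2*((3/10)*c0 + (3/10)*e1 + (-3/10)*a2 + (-3/10)*d2)^2 + 2*((3/10)*a0 + (3/10)*b1 + (3/10)*c2)^2 + ((-1/5)*a0 + (-1/5)*b1 + (-1/5)*c2)^2 + ((2/5)*b0 + (2/5)*d1 + (2/5)*e2)^2 + ((-1/5)*c0 + (-1/5)*e1 + (1/5)*a2 + (1/5)*d2)^2 + 2*((3/10)*c0 + (3/10)*e1 + (-3/10)*a2 + (-3/10)*d2)^2 + 2*((3/10)*b0 + (3/10)*d1 + (3/10)*e2)^2 + ((-1/5)*a0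 + (-1/5)*b1 + (-1/5)*c2)^2 + ((-1/5)*b0 + (-1/5)*d1 + (-1/5)*e2)^2 + ((2/5)*c0 + (2/5)*e1 + (-2/5)*a2 + (-2/5)*d2)^2 := by positivity
  have hc1 : (0:ℝ) ≤ η24/2 - m/2 := by linarith
  have hc2 : (0:ℝ) ≤ (3*η1-η24)/4 - m/2 := by linarith
  have hc3 : (0:ℝ) ≤ (5*η1+10*η2-9*η24)/12 - m/2 := by linarith
  have key : η1 / 2 * ((a0)^2 + (a1)^2 + (a2)^2 + (b0)^2 + (b1)^2 + (b2)^2 + (c0)^2 + (c1)^2 + (c2)^2 + (b0)^2 + (b1)^2 + (b2)^2 + (d0)^2 + (d1)^2 + (d2)^2 + (e0)^2 + (e1)^2 + (e2)^2 + (c0)^2 + (c1)^2 + (c2)^2 + (e0)^2 + (e1)^2 + (e2)^2 + ((-1)*a0 + (-1)*d0)^2 + ((-1)*a1 + (-1)*d1)^2 + ((-1)*a2 + (-1)*d2)^2) + (η2 - η24) / 2 * (((a0) + (b1) + (c2))^2 + ((b0) + (d1) + (e2))^2 + ((c0) + (e1) + ((-1)*a2 + (-1)*d2))^2) + (η24 -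 η1) / 2 * ((a0)*(a0) + (a1)*(b0) + (a2)*(c0) + (b0)*(a1) + (b1)*(b1) + (b2)*(c1) + (c0)*(a2) + (c1)*(b2) + (c2)*(c2) + (b0)*(b0) + (b1)*(d0) + (b2)*(e0) + (d0)*(b1) + (d1)*(d1) + (d2)*(e1) + (e0)*(b2) + (e1)*(d2) + (e2)*(e2) + (c0)*(c0) + (c1)*(e0) + (c2)*((-1)*a0 + (-1)*d0) + (e0)*(c1) + (e1)*(e1) + (e2)*((-1)*a1 + (-1)*d1) + ((-1)*a0 + (-1)*d0)*(c2) + ((-1)*a1 + (-1)*d1)*(e2) + ((-1)*a2 + (-1)*d2)*((-1)*a2 + (-1)*d2))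
      - m/2 * ((a0)^2 + (a1)^2 + (a2)^2 + (b0)^2 + (b1)^2 + (b2)^2 + (c0)^2 + (c1)^2 + (c2)^2 + (b0)^2 + (b1)^2 + (b2)^2 + (d0)^2 + (d1)^2 + (d2)^2 + (e0)^2 + (e1)^2 + (e2)^2 + (c0)^2 + (c1)^2 + (c2)^2 + (e0)^2 + (e1)^2 + (e2)^2 + ((-1)*a0 + (-1)*d0)^2 + ((-1)*a1 + (-1)*d1)^2 + ((-1)*a2 + (-1)*d2)^2)
      = (η24/2 - m/2) * (((3/5)*a0 + (-2/5)*b1 + (-2/5)*c2)^2 + ((8/15)*b0 + (1/3)*a1 + (-2/15)*d1 + (-2/15)*e2)^2 + ((8/15)*c0 + (-2/15)*e1 + (7/15)*a2 + (2/15)*d2)^2 + 2*((8/15)*b0 + (1/3)*a1 + (-2/15)*d1 + (-2/15)*e2)^2 + 2*((-2/15)*a0 + (1/3)*d0 + (8/15)*b1 + (-2/15)*c2)^2 + 2*((1/3)*e0 + (1/3)*c1 + (1/3)*b2)^2 + 2*((8/15)*c0 + (-2/15)*e1 + (7/15)*a2 + (2/15)*d2)^2 + 2*((1/3)*e0 +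 (1/3)*c1 + (1/3)*b2)^2 + 2*((-7/15)*a0 + (-1/3)*d0 + (-2/15)*b1 + (8/15)*c2)^2 + ((-2/15)*a0 + (1/3)*d0 + (8/15)*b1 + (-2/15)*c2)^2 + ((-2/5)*b0 + (3/5)*d1 + (-2/5)*e2)^2 + ((-2/15)*c0 + (8/15)*e1 + (2/15)*a2 + (7/15)*d2)^2 + 2*((1/3)*e0 + (1/3)*c1 + (1/3)*b2)^2 + 2*((-2/15)*c0 + (8/15)*e1 + (2/15)*a2 + (7/15)*d2)^2 + 2*((-2/15)*b0 + (-1/3)*a1 + (-7/15)*d1 + (8/15)*e2)^2 + ((-7/15)*a0 + (-1/3)*d0 + (-2/15)*b1 + (8/15)*c2)^2 + ((-2/15)*b0 + (-1/3)*a1 + (-7/15)*d1 + (8/15)*e2)^2 + ((-2/5)*c0 + (-2/5)*e1 + (-3/5)*a2 + (-3/5)*d2)^2) + ((3*η1-η24)/4 - m/2) * (((-1/3)*b0 + (2/3)*a1 + (1/3)*d1 + (1/3)*e2)^2 + ((-1/3)*c0 + (1/3)*e1 + (1/3)*a2 + (-1/3)*d2)^2 + 2*((1/6)*b0 + (-1/3)*a1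 + (-1/6)*d1 + (-1/6)*e2)^2 + 2*((-1/6)*a0 + (-1/3)*d0 + (1/6)*b1 + (-1/6)*c2)^2 + 2*((-1/3)*e0 + (-1/3)*c1 + (2/3)*b2)^2 + 2*((1/6)*c0 + (-1/6)*e1 + (-1/6)*a2 + (1/6)*d2)^2 + 2*((-1/3)*e0 + (2/3)*c1 + (-1/3)*b2)^2 + 2*((1/6)*a0 + (1/3)*d0 + (-1/6)*b1 + (1/6)*c2)^2 + ((1/3)*a0 + (2/3)*d0 + (-1/3)*b1 + (1/3)*c2)^2 + ((1/3)*c0 + (-1/3)*e1 + (-1/3)*a2 + (1/3)*d2)^2 + 2*((2/3)*e0 + (-1/3)*c1 + (-1/3)*b2)^2 + 2*((-1/6)*c0 + (1/6)*e1 + (1/6)*a2 + (-1/6)*d2)^2 + 2*((-1/6)*b0 + (1/3)*a1 + (1/6)*d1 + (1/6)*e2)^2 + ((-1/3)*a0 + (-2/3)*d0 + (1/3)*b1 + (-1/3)*c2)^2 + ((1/3)*b0 + (-2/3)*a1 + (-1/3)*d1 + (-1/3)*e2)^2)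
        + ((5*η1+10*η2-9*η24)/12 - m/2) * (((2/5)*a0 + (2/5)*b1 + (2/5)*c2)^2 + ((-1/5)*b0 + (-1/5)*d1 + (-1/5)*e2)^2 + ((-1/5)*c0 + (-1/5)*e1 + (1/5)*a2 + (1/5)*d2)^2 + 2*((3/10)*b0 + (3/10)*d1 + (3/10)*e2)^2 + 2*((3/10)*a0 + (3/10)*b1 + (3/10)*c2)^2 + 2*((3/10)*c0 + (3/10)*e1 + (-3/10)*a2 + (-3/10)*d2)^2 + 2*((3/10)*a0 + (3/10)*b1 + (3/10)*c2)^2 + ((-1/5)*a0 + (-1/5)*b1 + (-1/5)*c2)^2 + ((2/5)*b0 + (2/5)*d1 + (2/5)*e2)^2 + ((-1/5)*c0 + (-1/5)*e1 + (1/5)*a2 + (1/5)*d2)^2 + 2*((3/10)*c0 + (3/10)*e1 + (-3/10)*a2 + (-3/10)*d2)^2 + 2*((3/10)*b0 + (3/10)*d1 + (3/10)*e2)^2 + ((-1/5)*a0 + (-1/5)*b1 + (-1/5)*c2)^2 + ((-1/5)*b0 + (-1/5)*d1 + (-1/5)*e2)^2 + ((2/5)*c0 + (2/5)*e1 + (-2/5)*a2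 + (-2/5)*d2)^2) := by ring
  linarith [key, mul_nonneg hc1 hS1, mul_nonneg hc2 hS2, mul_nonneg hc3 hS3]
end

section
/- Let n be a C¹ vector field with |n| ≡ 1 on an open subset of ℝ³, let σ ∈ ℝ, and suppose the constants satisfy k1 = k3 ≥ k2 > k2 + k4 > 0 > k4. Then at every point the Oseen–Frank density satisfies k1(∇·n)² + k2(n·(∇×n) + σ)² + k3|n×(∇×n)|² + (k2+k4)(tr((∇n)²) − (∇·n)²) ≥ (k2+k4)|∇n|² + 2σk2 · n·(∇×n). -/
noncomputable section

abbrev V3 := Fin 3 → ℝ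

/-- The partial derivative `∂ᵢ f` of a scalar field. -/
def pd (f : V3 → ℝ) (i : Fin 3) (x : V3) : ℝ := fderiv ℝ f x (Pi.single i 1)

/-- The Levi-Civita symbol on `Fin 3`. -/
def eps (i j k : Fin 3) : ℝ :=
  (((i : ℕ) : ℝ) - ((j : ℕ) : ℝ)) * (((j : ℕ) : ℝ) - ((k : ℕ) : ℝ)) *
    (((k : ℕ) : ℝ) - ((i : ℕ) : ℝ)) / 2

/-- `(∇n)_{ij} = ∂_j n_i`. -/
def pdV (n : V3 → V3) (i j : Fin 3) (x : V3) : ℝ := pd (fun y => n y i) j x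

/-- `∇·n`. -/
def divV (n : V3 → V3) (x : V3) : ℝ := ∑ i, pdV n i i x

/-- `(∇×n)_i = ε_{ijk} ∂_j n_k`. -/
def curlV (n : V3 → V3) (i : Fin 3) (x : V3) : ℝ := ∑ j, ∑ k, eps i j k * pdV n k j x

/-- Cross product in `ℝ³`. -/
def crossV (a b : V3) (i : Fin 3) : ℝ := ∑ j, ∑ k, eps i j k * a j * b k


lemma cross_sq (a b : V3) :
    (∑ i, (crossV a b i)^2) = (∑ i, (a i)^2) * (∑ i, (b i)^2) - (∑ i, a i * b i)^2 := by
  simp [crossV, eps, Fin.sum_univ_three]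
  ring

lemma curl_sq (p : Fin 3 → Fin 3 → ℝ) :
    (∑ i, (∑ j, ∑ k, eps i j k * p k j)^2)
      = (∑ i, ∑ j, (p i j)^2) - (∑ i, ∑ j, p i j * p j i) := by
  simp [eps, Fin.sum_univ_three]
  ring

/-- For a `C¹` unit vector field `n` on an open set `U ⊆ ℝ³`, `σ ∈ ℝ`,
and constants with `k₁ = k₃ ≥ k₂ > k₂ + k₄ > 0 > k₄`, at every point of `U` the
Oseen–Frank density satisfies
`k₁(∇·n)² + k₂(n·(∇×n) + σ)² + k₃|n×(∇×n)|² + (k₂+k₄)(tr((∇n)²) − (∇·n)²)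
  ≥ (k₂+k₄)|∇n|² + 2σk₂ n·(∇×n)`. -/
theorem stmt_10 (k1 k2 k3 k4 σ : ℝ) (U : Set V3) (n : V3 → V3)
    (hU : IsOpen U) (hC1 : ContDiffOn ℝ 1 n U)
    (hunit : ∀ y ∈ U, (∑ i, (n y i) ^ 2) = 1)
    (hk13 : k1 = k3) (hk32 : k2 ≤ k3) (hk24 : k2 + k4 < k2) (hk24pos : 0 < k2 + k4)
    (hk4 : k4 < 0) (x : V3) (hx : x ∈ U) :
    (k2 + k4) * (∑ i, ∑ j, (pdV n i j x) ^ 2)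
        + 2 * σ * k2 * (∑ i, n x i * curlV n i x) ≤
      k1 * (divV n x) ^ 2
        + k2 * ((∑ i, n x i * curlV n i x) + σ) ^ 2
        + k3 * (∑ i, (crossV (n x) (fun j => curlV n j x) i) ^ 2)
        + (k2 + k4) * ((∑ i, ∑ j, pdV n i j x * pdV n j i x) - (divV n x) ^ 2) := by
  set a : V3 := n x with ha
  set b : V3 := fun i => curlV n i x with hb
  set t : ℝ := ∑ i, a i * b i with ht
  set C : ℝ := ∑ i, (crossV a b i)^2 with hC
  set S : ℝ := ∑ i, ∑ j, (pdV n i j x)^2 with hS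
  set T : ℝ := ∑ i, ∑ j, pdV n i j x * pdV n j i x with hT
  set D : ℝ := divV n x with hD
  have hB : (∑ i, (b i)^2) = S - T := by
    have := curl_sq (fun i j => pdV n i j x)
    simpa [hb, curlV, hS, hT] using this
  have hCeq : C = (∑ i, (b i)^2) - t^2 := by
    have := cross_sq a b
    rw [hC, this, hunit x hx]
    ring
  have hCnonneg : 0 ≤ C := Finset.sum_nonneg fun i _ => sq_nonneg _
  have hST : T = S - C - t^2 := by
    have : (∑ i, (b i)^2) = C + t^2 := by rw [hCeq]; ring
    linarith [hB, this]
  nlinarith [sq_nonneg D, sq_nonneg t, sq_nonneg σ, hCnonneg,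
    mul_nonneg (le_of_lt hk24pos) (sq_nonneg D),
    mul_nonneg (le_of_lt hk24pos) hCnonneg]
end
end
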